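/- arXiv:1902.07091 — 7 statements merged into one kernel-verified Lean document; each statement's English description precedes it below -/
import Mathlib

section
/- Let μ, ν be finite nonempty sets, and consider functions f_a : μ → Fin 2, f_b : Fin 2 × ν → Fin 2, f_c : Fin 2 × ν → Fin 2 (the instrumental scenario: a ← μ, b ← (a, ν), c ← (b, ν)). Define the observed triple for (λ, κ) ∈ μ × ν as (a, b, c) where a = f_a(λ), b = f_b(a, κ), c = f_c(b, κ). Then the set of observed triples over all (λ, κ) ∈ μ × ν cannot equal {(0,0,0), (1,0,1)}. -/
def instrumentalObservation {μ ν α β γ : Type*} (f_a : μ → α) (f_b : α × ν → β)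
    (f_c : β × ν → γ) (p : μ × ν) : α × β × γ :=
  (f_a p.1, f_b (f_a p.1, p.2), f_c (f_b (f_a p.1, p.2), p.2))

/-- Recombine the `μ`-value behind the first triple with the `ν`-value behind the second:
`c` depends only on `b` and the `ν`-value, so a matching `b` forces a matching `c`. -/
theorem exists_mem_range_instrumentalObservation_of_mem_range
    {μ ν α β γ : Type*} {f_a : μ → α} {f_b : α × ν → β} {f_c : β × ν → γ}
    {a a' : α} {b b' : β} {c c' : γ}
    (h : (a, b, c) ∈ Set.range (instrumentalObservation f_a f_b f_c))
    (h' : (a', b', c') ∈ Set.range (instrumentalObservation f_a f_b f_c)) :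
    ∃ b'' c'', (a, b'', c'') ∈ Set.range (instrumentalObservation f_a f_b f_c) ∧
      (b'' = b' → c'' = c') := by
  obtain ⟨⟨l, k⟩, hlk⟩ := h
  obtain ⟨⟨l', k'⟩, hlk'⟩ := h'
  simp only [instrumentalObservation, Prod.mk.injEq] at hlk hlk'
  obtain ⟨rfl, -, -⟩ := hlk
  obtain ⟨rfl, rfl, rfl⟩ := hlk'
  refine ⟨f_b (f_a l, k'), f_c (f_b (f_a l, k'), k'), ⟨(l, k'), rfl⟩, fun hb => ?_⟩
  rw [hb]

theorem instrumental_incompatible_general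
    {μ ν : Type*}
    (f_a : μ → Fin 2) (f_b : Fin 2 × ν → Fin 2) (f_c : Fin 2 × ν → Fin 2) :
    Set.range (fun p : μ × ν =>
        (f_a p.1, f_b (f_a p.1, p.2), f_c (f_b (f_a p.1, p.2), p.2)))
      ≠ ({((0 : Fin 2), (0 : Fin 2), (0 : Fin 2)), (1, 0, 1)} :
          Set (Fin 2 × Fin 2 × Fin 2)) := by
  intro h
  change Set.range (instrumentalObservation f_a f_b f_c) = _ at h
  have h₀ : ((0 : Fin 2), (0 : Fin 2), (0 : Fin 2)) ∈
      Set.range (instrumentalObservation f_a f_b f_c) := by simp [h]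
  have h₁ : ((1 : Fin 2), (0 : Fin 2), (1 : Fin 2)) ∈
      Set.range (instrumentalObservation f_a f_b f_c) := by simp [h]
  obtain ⟨b, c, hmem, hbc⟩ := exists_mem_range_instrumentalObservation_of_mem_range h₀ h₁
  rw [h] at hmem
  simp only [Set.mem_insert_iff, Set.mem_singleton_iff, Prod.mk.injEq] at hmem
  rcases hmem with ⟨-, hb, hc⟩ | ⟨h01, -, -⟩
  · exact absurd (hbc hb) (by simp [hc])
  · exact absurd h01 (by decide)

/-- The support `{(0,0,0),(1,0,1)}` is possibilistically
incompatible with the instrumental causal structure. -/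
theorem instrumental_incompatible
    {μ ν : Type*} [Fintype μ] [Fintype ν] [Nonempty μ] [Nonempty ν]
    (f_a : μ → Fin 2) (f_b : Fin 2 × ν → Fin 2) (f_c : Fin 2 × ν → Fin 2) :
    Set.range (fun p : μ × ν =>
        (f_a p.1, f_b (f_a p.1, p.2), f_c (f_b (f_a p.1, p.2), p.2)))
      ≠ ({((0 : Fin 2), (0 : Fin 2), (0 : Fin 2)), (1, 0, 1)} :
          Set (Fin 2 × Fin 2 × Fin 2)) :=
  instrumental_incompatible_general f_a f_b f_c
end

section
/- Let μ, ρ, ν be finite nonempty sets and consider functions f_x : μ → Fin 2, f_y : ν → Fin 2, f_a : Fin 2 × ρ → Fin 2, f_b : Fin 2 × ρ → Fin 2 (the Bell structure: x ← μ, y ← ν, a ← (x, ρ), b ← (y, ρ)). Define the observed quadruple for (λ, r, κ) ∈ μ × ρ × ν as (x, a, b, y) with x = f_x(λ), y = f_y(κ), a = f_a(x, r), b = f_b(y, r). Then the image of the observation map over μ × ρ × ν cannot equal the PR-box support {(0,0,0,0),(0,1,1,0),(0,0,0,1),(0,1,1,1),(1,0,0,0),(1,1,1,0),(1,0,1,1),(1,1,0,1)}.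 -/
/-!
Fix any value `r` of the shared latent variable. Since the PR-box support contains quadruples with
either value of `x` and either value of `y`, every input pair `(x, y)` is reached together with `r`,
so `a = f_a (x, r)` and `b = f_b (y, r)` would satisfy `a ⊕ b = x ∧ y` for all four input pairs.
No deterministic local strategy does: the alternating sum of the four constraints reads `0 = 1`.
-/

/-- In `Fin 2`, `+` is exclusive or and `*` is conjunction. -/
def prBoxSupport : Set (Fin 2 × Fin 2 × Fin 2 × Fin 2) :=
  {q | q.2.1 + q.2.2.1 = q.1 * q.2.2.2}

theorem prBoxSupport_eq :
    prBoxSupport =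
      {((0 : Fin 2), (0 : Fin 2), (0 : Fin 2), (0 : Fin 2)),
        (0, 1, 1, 0), (0, 0, 0, 1), (0, 1, 1, 1),
        (1, 0, 0, 0), (1, 1, 1, 0), (1, 0, 1, 1), (1, 1, 0, 1)} := by
  ext ⟨x, a, b, y⟩
  fin_cases x <;> fin_cases a <;> fin_cases b <;> fin_cases y <;> simp [prBoxSupport]

open Fin.CommRing in
theorem exists_add_ne_mul (a b : Fin 2 → Fin 2) : ∃ x y, a x + b y ≠ x * y := by
  by_contra! h
  exact zero_ne_one (by linear_combination h 1 1 - h 1 0 - h 0 1 + h 0 0 : (0 : Fin 2) = 1)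

section Bell

variable {μ ρ ν X A B Y : Type*}

def bellObservation (f_x : μ → X) (f_y : ν → Y) (f_a : X × ρ → A) (f_b : Y × ρ → B)
    (t : μ × ρ × ν) : X × A × B × Y :=
  (f_x t.1, f_a (f_x t.1, t.2.1), f_b (f_y t.2.2, t.2.1), f_y t.2.2)

theorem mem_range_bellObservation {f_x : μ → X} {f_y : ν → Y} {f_a : X × ρ → A}
    {f_b : Y × ρ → B} {x : X} {y : Y} (hx : x ∈ Set.range f_x) (hy : y ∈ Set.range f_y)
    (r : ρ) : (x, f_a (x, r), f_b (y, r), y) ∈ Set.range (bellObservation f_x f_y f_a f_b) := by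
  obtain ⟨l, rfl⟩ := hx
  obtain ⟨k, rfl⟩ := hy
  exact ⟨(l, r, k), rfl⟩

theorem range_bellObservation_ne_prBoxSupport (f_x : μ → Fin 2) (f_y : ν → Fin 2)
    (f_a : Fin 2 × ρ → Fin 2) (f_b : Fin 2 × ρ → Fin 2) :
    Set.range (bellObservation f_x f_y f_a f_b) ≠ prBoxSupport := by
  intro h
  have hmem : ∀ q ∈ prBoxSupport, q ∈ Set.range (bellObservation f_x f_y f_a f_b) :=
    fun _ hq => h ▸ hq
  obtain ⟨⟨-, r, -⟩, -⟩ := hmem (0, 0, 0, 0) rfl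
  have hx : ∀ x, x ∈ Set.range f_x := fun x => by
    obtain ⟨t, ht⟩ := hmem (x, 0, 0, 0) (by simp [prBoxSupport])
    exact ⟨t.1, congrArg Prod.fst ht⟩
  have hy : ∀ y, y ∈ Set.range f_y := fun y => by
    obtain ⟨t, ht⟩ := hmem (0, 0, 0, y) (by simp [prBoxSupport])
    exact ⟨t.2.2, congrArg (·.2.2.2) ht⟩
  obtain ⟨x, y, hxy⟩ := exists_add_ne_mul (fun x => f_a (x, r)) (fun y => f_b (y, r))
  have hxyr := mem_range_bellObservation (f_a := f_a) (f_b := f_b) (hx x) (hy y) r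
  rw [h] at hxyr
  exact hxy hxyr

end Bell

theorem bell_pr_box_incompatible_general
    {μ ρ ν : Type*}
    (f_x : μ → Fin 2) (f_y : ν → Fin 2)
    (f_a : Fin 2 × ρ → Fin 2) (f_b : Fin 2 × ρ → Fin 2) :
    Set.range (fun t : μ × ρ × ν =>
        (f_x t.1, f_a (f_x t.1, t.2.1), f_b (f_y t.2.2, t.2.1), f_y t.2.2))
      ≠ ({((0 : Fin 2), (0 : Fin 2), (0 : Fin 2), (0 : Fin 2)),
          (0, 1, 1, 0), (0, 0, 0, 1), (0, 1, 1, 1),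
          (1, 0, 0, 0), (1, 1, 1, 0), (1, 0, 1, 1), (1, 1, 0, 1)} :
          Set (Fin 2 × Fin 2 × Fin 2 × Fin 2)) := by
  rw [← prBoxSupport_eq]
  exact range_bellObservation_ne_prBoxSupport f_x f_y f_a f_b

/-- The PR-box support is possibilistically incompatible with
the Bell causal structure. -/
theorem bell_pr_box_incompatible
    {μ ρ ν : Type*} [Fintype μ] [Fintype ρ] [Fintype ν]
    [Nonempty μ] [Nonempty ρ] [Nonempty ν]
    (f_x : μ → Fin 2) (f_y : ν → Fin 2)
    (f_a : Fin 2 × ρ → Fin 2) (f_b : Fin 2 × ρ → Fin 2) :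
    Set.range (fun t : μ × ρ × ν =>
        (f_x t.1, f_a (f_x t.1, t.2.1), f_b (f_y t.2.2, t.2.1), f_y t.2.2))
      ≠ ({((0 : Fin 2), (0 : Fin 2), (0 : Fin 2), (0 : Fin 2)),
          (0, 1, 1, 0), (0, 0, 0, 1), (0, 1, 1, 1),
          (1, 0, 0, 0), (1, 1, 1, 0), (1, 0, 1, 1), (1, 1, 0, 1)} :
          Set (Fin 2 × Fin 2 × Fin 2 × Fin 2)) :=
  bell_pr_box_incompatible_general f_x f_y f_a f_b
end

section
/- Let μ, ν, ρ be finite nonempty sets and consider functions f_a : ν × ρ → Fin 2, f_b : ρ × μ → Fin 2, f_c : μ × ν → Fin 2 (the triangle structure). Define the observed triple for (m, n, r) ∈ μ × ν × ρ as (f_a(n, r), f_b(r, m), f_c(m, n)). Then the image of the observation map cannot equal {(1,0,0), (0,1,0), (0,0,1)}. -/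
/-!
If `a` is nonzero at `(n₁, r₁)`, `b` at `(r₂, m₂)` and `c` at `(m₃, n₃)`, then at the latent point
`(m₂, n₃, r₁)` each output shares one source with one of these witnesses and is forced to vanish
by exclusivity: `b (r₁, m₂) = 0` because of `a`, `c (m₂, n₃) = 0` because of `b` and
`a (n₃, r₁) = 0` because of `c`. So the all-zero outcome occurs, and it is not one-hot.
-/

section Triangle

variable {μ ν ρ A B C : Type*} [Zero A] [Zero B] [Zero C]

theorem triangle_exists_all_zero (f_a : ν × ρ → A) (f_b : ρ × μ → B) (f_c : μ × ν → C)
    (hab : ∀ m n r, f_a (n, r) ≠ 0 → f_b (r, m) = 0)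
    (hbc : ∀ m n r, f_b (r, m) ≠ 0 → f_c (m, n) = 0)
    (hca : ∀ m n r, f_c (m, n) ≠ 0 → f_a (n, r) = 0)
    (ha : ∃ n r, f_a (n, r) ≠ 0) (hb : ∃ r m, f_b (r, m) ≠ 0) (hc : ∃ m n, f_c (m, n) ≠ 0) :
    ∃ m n r, f_a (n, r) = 0 ∧ f_b (r, m) = 0 ∧ f_c (m, n) = 0 := by
  obtain ⟨n₁, r₁, ha₁⟩ := ha
  obtain ⟨r₂, m₂, hb₂⟩ := hb
  obtain ⟨m₃, n₃, hc₃⟩ := hc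
  exact ⟨m₂, n₃, r₁, hca m₃ n₃ r₁ hc₃, hab m₂ n₁ r₁ ha₁, hbc m₂ n₃ r₂ hb₂⟩

end Triangle

def oneHot : Set (Fin 2 × Fin 2 × Fin 2) := {(1, 0, 0), (0, 1, 0), (0, 0, 1)}

theorem eq_zero_of_mem_oneHot {x y z : Fin 2} (h : (x, y, z) ∈ oneHot) :
    (x ≠ 0 → y = 0) ∧ (y ≠ 0 → z = 0) ∧ (z ≠ 0 → x = 0) := by
  simp only [oneHot, Set.mem_insert_iff, Set.mem_singleton_iff, Prod.mk.injEq] at h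
  rcases h with ⟨rfl, rfl, rfl⟩ | ⟨rfl, rfl, rfl⟩ | ⟨rfl, rfl, rfl⟩ <;> decide

theorem zero_notMem_oneHot : ((0, 0, 0) : Fin 2 × Fin 2 × Fin 2) ∉ oneHot := by
  simp [oneHot]

theorem triangle_one_hot_incompatible_general
    {μ ν ρ : Type*}
    (f_a : ν × ρ → Fin 2) (f_b : ρ × μ → Fin 2) (f_c : μ × ν → Fin 2) :
    Set.range (fun t : μ × ν × ρ =>
        (f_a (t.2.1, t.2.2), f_b (t.2.2, t.1), f_c (t.1, t.2.1)))
      ≠ ({((1 : Fin 2), (0 : Fin 2), (0 : Fin 2)), (0, 1, 0), (0, 0, 1)} :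
          Set (Fin 2 × Fin 2 × Fin 2)) := by
  intro h
  change _ = oneHot at h
  have mem : ∀ m n r, (f_a (n, r), f_b (r, m), f_c (m, n)) ∈ oneHot :=
    fun m n r => h ▸ ⟨(m, n, r), rfl⟩
  have attained : ∀ p ∈ oneHot, ∃ m n r, (f_a (n, r), f_b (r, m), f_c (m, n)) = p :=
    fun p hp => by obtain ⟨⟨m, n, r⟩, e⟩ := h ▸ hp; exact ⟨m, n, r, e⟩
  obtain ⟨_, n₁, r₁, ha₁⟩ := attained (1, 0, 0) (by simp [oneHot])
  obtain ⟨m₂, _, r₂, hb₂⟩ := attained (0, 1, 0) (by simp [oneHot])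
  obtain ⟨m₃, n₃, _, hc₃⟩ := attained (0, 0, 1) (by simp [oneHot])
  simp only [Prod.mk.injEq] at ha₁ hb₂ hc₃
  obtain ⟨m, n, r, ha, hb, hc⟩ := triangle_exists_all_zero f_a f_b f_c
    (fun m n r => (eq_zero_of_mem_oneHot (mem m n r)).1)
    (fun m n r => (eq_zero_of_mem_oneHot (mem m n r)).2.1)
    (fun m n r => (eq_zero_of_mem_oneHot (mem m n r)).2.2)
    ⟨n₁, r₁, by simp [ha₁.1]⟩ ⟨r₂, m₂, by simp [hb₂.2.1]⟩ ⟨m₃, n₃, by simp [hc₃.2.2]⟩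
  exact zero_notMem_oneHot (by simpa only [ha, hb, hc] using mem m n r)

/-- The one-hot support `{(1,0,0),(0,1,0),(0,0,1)}` is
possibilistically incompatible with the triangle causal structure. -/
theorem triangle_one_hot_incompatible
    {μ ν ρ : Type*} [Fintype μ] [Fintype ν] [Fintype ρ]
    [Nonempty μ] [Nonempty ν] [Nonempty ρ]
    (f_a : ν × ρ → Fin 2) (f_b : ρ × μ → Fin 2) (f_c : μ × ν → Fin 2) :
    Set.range (fun t : μ × ν × ρ =>
        (f_a (t.2.1, t.2.2), f_b (t.2.2, t.1), f_c (t.1, t.2.1)))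
      ≠ ({((1 : Fin 2), (0 : Fin 2), (0 : Fin 2)), (0, 1, 0), (0, 0, 1)} :
          Set (Fin 2 × Fin 2 × Fin 2)) :=
  triangle_one_hot_incompatible_general f_a f_b f_c
end

section
/- Let μ, ν, ρ be finite sets with product distribution P = P_μ ⊗ P_ρ ⊗ P_ν, and let x, y, a, b be defined by functions as in the Bell causal structure with all of x, y, a, b valued in {+1, −1}. For ξ, υ ∈ Fin 2, write ⟨ab | ξ υ⟩ for the conditional expectation of the product a·b given x = ξ, y = υ (assuming each conditioning event has positive probability, with x, y relabeled to Fin 2). Then the CHSH quantity S = ⟨ab|00⟩ + ⟨ab|01⟩ + ⟨ab|10⟩ − ⟨ab|11⟩ satisfies |S| ≤ 2. -/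
/-- The conditional two-point correlator `⟨ab | ξ υ⟩` in the Bell causal
structure. -/
noncomputable def chshCorr {μ ρ ν : Type*} [Fintype μ] [Fintype ρ] [Fintype ν]
    (Pμ : μ → ℝ) (Pρ : ρ → ℝ) (Pν : ν → ℝ)
    (f_x : μ → Fin 2) (f_y : ν → Fin 2)
    (f_a f_b : Fin 2 × ρ → ℝ) (ξ υ : Fin 2) : ℝ :=
  (∑ t ∈ Finset.univ.filter
      (fun t : μ × ρ × ν => f_x t.1 = ξ ∧ f_y t.2.2 = υ),
      Pμ t.1 * Pρ t.2.1 * Pν t.2.2 * (f_a (ξ, t.2.1) * f_b (υ, t.2.1))) /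
  (∑ t ∈ Finset.univ.filter
      (fun t : μ × ρ × ν => f_x t.1 = ξ ∧ f_y t.2.2 = υ),
      Pμ t.1 * Pρ t.2.1 * Pν t.2.2)

/-!
The variables x and y depend only on λ_μ and λ_ν, which are independent of λ_ρ, so conditioning
on x = ξ, y = υ leaves the law of λ_ρ unchanged: each correlator is the P_ρ-average of
a(ξ, λ) b(υ, λ). The CHSH combination is then a P_ρ-average of
a₀ (b₀ + b₁) + a₁ (b₀ - b₁), which is at most 2 in absolute value pointwise.
-/

open Finset

section

variable {μ ρ ν : Type*} [Fintype μ] [Fintype ρ] [Fintype ν]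

theorem sum_filter_prod_weight_mul (Pμ : μ → ℝ) (Pρ : ρ → ℝ) (Pν : ν → ℝ)
    (p : μ → Prop) (q : ν → Prop) [DecidablePred p] [DecidablePred q] (g : ρ → ℝ) :
    ∑ t ∈ univ.filter (fun t : μ × ρ × ν => p t.1 ∧ q t.2.2),
        Pμ t.1 * Pρ t.2.1 * Pν t.2.2 * g t.2.1
      = (∑ m ∈ univ.filter p, Pμ m) * (∑ n ∈ univ.filter q, Pν n) * ∑ r, Pρ r * g r := by
  have hfilter : univ.filter (fun t : μ × ρ × ν => p t.1 ∧ q t.2.2)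
      = univ.filter p ×ˢ (univ ×ˢ univ.filter q) := by
    ext t; simp
  rw [hfilter]
  simp only [Finset.sum_product, Finset.sum_mul, Finset.mul_sum]
  rw [sum_comm]
  refine sum_congr rfl fun r _ => ?_
  rw [sum_comm]
  refine sum_congr rfl fun n _ => sum_congr rfl fun m _ => ?_
  ring

theorem chshCorr_eq_sum (Pμ : μ → ℝ) (Pρ : ρ → ℝ) (Pν : ν → ℝ) (hρ1 : ∑ r, Pρ r = 1)
    (f_x : μ → Fin 2) (f_y : ν → Fin 2) (f_a f_b : Fin 2 × ρ → ℝ) (ξ υ : Fin 2)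
    (hpos : 0 < ∑ t ∈ univ.filter (fun t : μ × ρ × ν => f_x t.1 = ξ ∧ f_y t.2.2 = υ),
      Pμ t.1 * Pρ t.2.1 * Pν t.2.2) :
    chshCorr Pμ Pρ Pν f_x f_y f_a f_b ξ υ = ∑ r, Pρ r * (f_a (ξ, r) * f_b (υ, r)) := by
  have hnum := sum_filter_prod_weight_mul Pμ Pρ Pν (f_x · = ξ) (f_y · = υ)
    fun r => f_a (ξ, r) * f_b (υ, r)
  have hden := sum_filter_prod_weight_mul Pμ Pρ Pν (f_x · = ξ) (f_y · = υ) fun _ => 1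
  simp only [mul_one, hρ1] at hden
  rw [hden] at hpos
  rw [chshCorr, hnum, hden, mul_div_cancel_left₀ _ hpos.ne']

end

theorem abs_chsh_le_two {a₀ a₁ b₀ b₁ : ℝ} (ha₀ : |a₀| ≤ 1) (ha₁ : |a₁| ≤ 1)
    (hb₀ : |b₀| ≤ 1) (hb₁ : |b₁| ≤ 1) :
    |a₀ * b₀ + a₀ * b₁ + a₁ * b₀ - a₁ * b₁| ≤ 2 := by
  have hsplit : a₀ * b₀ + a₀ * b₁ + a₁ * b₀ - a₁ * b₁ = a₀ * (b₀ + b₁) + a₁ * (b₀ - b₁) := by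
    ring
  have hb : |b₀ + b₁| + |b₀ - b₁| ≤ 2 := by
    rw [abs_le] at hb₀ hb₁
    rcases abs_cases (b₀ + b₁) with ⟨h, _⟩ | ⟨h, _⟩ <;>
      rcases abs_cases (b₀ - b₁) with ⟨h', _⟩ | ⟨h', _⟩ <;> linarith
  calc |a₀ * b₀ + a₀ * b₁ + a₁ * b₀ - a₁ * b₁|
      ≤ |a₀| * |b₀ + b₁| + |a₁| * |b₀ - b₁| := by
        rw [hsplit, ← abs_mul, ← abs_mul]; exact abs_add_le _ _
    _ ≤ 1 * |b₀ + b₁| + 1 * |b₀ - b₁| := by gcongr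
    _ ≤ 2 := by linarith

theorem abs_sum_weight_mul_le {ι : Type*} (s : Finset ι) {w f : ι → ℝ} {c : ℝ}
    (hw : ∀ i ∈ s, 0 ≤ w i) (hw1 : ∑ i ∈ s, w i = 1) (hf : ∀ i ∈ s, |f i| ≤ c) :
    |∑ i ∈ s, w i * f i| ≤ c :=
  calc |∑ i ∈ s, w i * f i| ≤ ∑ i ∈ s, w i * |f i| := by
        refine (abs_sum_le_sum_abs _ _).trans (sum_le_sum fun i hi => ?_)
        rw [abs_mul, abs_of_nonneg (hw i hi)]
    _ ≤ ∑ i ∈ s, w i * c := sum_le_sum fun i hi => mul_le_mul_of_nonneg_left (hf i hi) (hw i hi)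
    _ = c := by rw [← sum_mul, hw1, one_mul]

theorem bell_chsh_general
    {μ ρ ν : Type*} [Fintype μ] [Fintype ρ] [Fintype ν]
    (Pμ : μ → ℝ) (Pρ : ρ → ℝ) (Pν : ν → ℝ)
    (hρ0 : ∀ x, 0 ≤ Pρ x) (hρ1 : ∑ x, Pρ x = 1)
    (f_x : μ → Fin 2) (f_y : ν → Fin 2)
    (f_a f_b : Fin 2 × ρ → ℝ)
    (ha : ∀ p, f_a p = 1 ∨ f_a p = -1)
    (hb : ∀ p, f_b p = 1 ∨ f_b p = -1)
    (hpos : ∀ ξ υ : Fin 2,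
      0 < ∑ t ∈ Finset.univ.filter
          (fun t : μ × ρ × ν => f_x t.1 = ξ ∧ f_y t.2.2 = υ),
          Pμ t.1 * Pρ t.2.1 * Pν t.2.2) :
    |chshCorr Pμ Pρ Pν f_x f_y f_a f_b 0 0
      + chshCorr Pμ Pρ Pν f_x f_y f_a f_b 0 1
      + chshCorr Pμ Pρ Pν f_x f_y f_a f_b 1 0
      - chshCorr Pμ Pρ Pν f_x f_y f_a f_b 1 1| ≤ 2 := by
  have hcorr : ∀ ξ υ, chshCorr Pμ Pρ Pν f_x f_y f_a f_b ξ υ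
      = ∑ r, Pρ r * (f_a (ξ, r) * f_b (υ, r)) :=
    fun ξ υ => chshCorr_eq_sum Pμ Pρ Pν hρ1 f_x f_y f_a f_b ξ υ (hpos ξ υ)
  have abs_le_one : ∀ {f : Fin 2 × ρ → ℝ}, (∀ p, f p = 1 ∨ f p = -1) → ∀ p, |f p| ≤ 1 :=
    fun hf p => by rcases hf p with h | h <;> simp [h]
  calc _ = |∑ r, Pρ r * (f_a (0, r) * f_b (0, r) + f_a (0, r) * f_b (1, r)
          + f_a (1, r) * f_b (0, r) - f_a (1, r) * f_b (1, r))| := by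
        simp only [hcorr, ← sum_add_distrib, ← sum_sub_distrib, mul_add, mul_sub]
    _ ≤ 2 := abs_sum_weight_mul_le univ (fun r _ => hρ0 r) hρ1 fun r _ =>
        abs_chsh_le_two (abs_le_one ha _) (abs_le_one ha _) (abs_le_one hb _) (abs_le_one hb _)

/-- any Bell-structure functional causal model satisfies the
CHSH inequality `|S| ≤ 2`. -/
theorem bell_chsh
    {μ ρ ν : Type*} [Fintype μ] [Fintype ρ] [Fintype ν]
    (Pμ : μ → ℝ) (Pρ : ρ → ℝ) (Pν : ν → ℝ)
    (hμ0 : ∀ x, 0 ≤ Pμ x) (hμ1 : ∑ x, Pμ x = 1)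
    (hρ0 : ∀ x, 0 ≤ Pρ x) (hρ1 : ∑ x, Pρ x = 1)
    (hν0 : ∀ x, 0 ≤ Pν x) (hν1 : ∑ x, Pν x = 1)
    (f_x : μ → Fin 2) (f_y : ν → Fin 2)
    (f_a f_b : Fin 2 × ρ → ℝ)
    (ha : ∀ p, f_a p = 1 ∨ f_a p = -1)
    (hb : ∀ p, f_b p = 1 ∨ f_b p = -1)
    (hpos : ∀ ξ υ : Fin 2,
      0 < ∑ t ∈ Finset.univ.filter
          (fun t : μ × ρ × ν => f_x t.1 = ξ ∧ f_y t.2.2 = υ),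
          Pμ t.1 * Pρ t.2.1 * Pν t.2.2) :
    |chshCorr Pμ Pρ Pν f_x f_y f_a f_b 0 0
      + chshCorr Pμ Pρ Pν f_x f_y f_a f_b 0 1
      + chshCorr Pμ Pρ Pν f_x f_y f_a f_b 1 0
      - chshCorr Pμ Pρ Pν f_x f_y f_a f_b 1 1| ≤ 2 :=
  bell_chsh_general Pμ Pρ Pν hρ0 hρ1 f_x f_y f_a f_b ha hb hpos
end

section
/- Let μ, ν be finite sets and f_a : μ → Fin 2, f_b : Fin 2 × ν → Fin 2, f_c : Fin 2 × ν → Fin 2 define the instrumental scenario observation map. Let P be the pushforward of any product distribution P_μ ⊗ P_ν. Whenever P(a = 0) > 0 and P(a = 1) > 0, the instrumental inequality holds: P(b = 0, c = 0 | a = 0) + P(b = 0, c = 1 | a = 1) ≤ 1. -/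
/-!
Since `a` depends only on `λ`, and `b`, `c` only on `a` and `κ`, conditioning on `a = i` leaves
the law of `κ` unchanged: `P(b = j, c = k | a = i) = P_ν(f_b(i, κ) = j, f_c(j, κ) = k)`.
The two events `f_b(0, κ) = 0 ∧ f_c(0, κ) = 0` and `f_b(1, κ) = 0 ∧ f_c(0, κ) = 1` of `κ` are
disjoint, because in both `c` responds to the same value `b = 0`; so their probabilities sum to
at most one.
-/

open Finset

section ProductWeights

variable {α β : Type*} [Fintype α] [Fintype β] (w : α → ℝ) (v : β → ℝ)

lemma sum_filter_and_mul (p : α → Prop) (q : β → Prop) [DecidablePred p] [DecidablePred q] :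
    ∑ x ∈ univ.filter (fun x : α × β => p x.1 ∧ q x.2), w x.1 * v x.2 =
      (∑ a ∈ univ.filter p, w a) * ∑ b ∈ univ.filter q, v b := by
  rw [← univ_product_univ, filter_product, sum_product, sum_mul_sum]

lemma sum_filter_fst_mul (hv : ∑ b, v b = 1) (p : α → Prop) [DecidablePred p] :
    ∑ x ∈ univ.filter (fun x : α × β => p x.1), w x.1 * v x.2 = ∑ a ∈ univ.filter p, w a := by
  simpa [hv] using sum_filter_and_mul w v p (fun _ => True)

lemma sum_filter_and_mul_div_sum_filter_fst_mul (hv : ∑ b, v b = 1)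
    (p : α → Prop) (q : β → Prop) [DecidablePred p] [DecidablePred q]
    (hp : ∑ x ∈ univ.filter (fun x : α × β => p x.1), w x.1 * v x.2 ≠ 0) :
    (∑ x ∈ univ.filter (fun x : α × β => p x.1 ∧ q x.2), w x.1 * v x.2) /
        ∑ x ∈ univ.filter (fun x : α × β => p x.1), w x.1 * v x.2 =
      ∑ b ∈ univ.filter q, v b := by
  rw [sum_filter_fst_mul w v hv] at hp ⊢
  rw [sum_filter_and_mul, mul_div_cancel_left₀ _ hp]

end ProductWeights

lemma sum_filter_add_sum_filter_le_one {β : Type*} [Fintype β] (v : β → ℝ)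
    (hv0 : ∀ b, 0 ≤ v b) (hv1 : ∑ b, v b = 1) (q r : β → Prop)
    [DecidablePred q] [DecidablePred r] (hqr : ∀ b, q b → ¬ r b) :
    ∑ b ∈ univ.filter q, v b + ∑ b ∈ univ.filter r, v b ≤ 1 := by
  rw [← sum_disjUnion (disjoint_filter.mpr fun b _ => hqr b), ← hv1]
  exact sum_le_univ_sum_of_nonneg hv0

lemma filter_instrumental_eq {μ ν α β γ : Type*} [Fintype μ] [Fintype ν]
    [DecidableEq α] [DecidableEq β] [DecidableEq γ]
    (f_a : μ → α) (f_b : α × ν → β) (f_c : β × ν → γ) (i : α) (j : β) (k : γ) :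
    univ.filter (fun p : μ × ν =>
        f_a p.1 = i ∧ f_b (f_a p.1, p.2) = j ∧ f_c (f_b (f_a p.1, p.2), p.2) = k) =
      univ.filter (fun p : μ × ν => f_a p.1 = i ∧ (f_b (i, p.2) = j ∧ f_c (j, p.2) = k)) :=
  filter_congr fun _ _ => by
    constructor <;> rintro ⟨rfl, rfl, h⟩ <;> exact ⟨rfl, rfl, h⟩

theorem instrumental_inequality_general
    {μ ν : Type*} [Fintype μ] [Fintype ν]
    (Pμ : μ → ℝ) (Pν : ν → ℝ)
    (hν0 : ∀ x, 0 ≤ Pν x) (hν1 : ∑ x, Pν x = 1)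
    (f_a : μ → Fin 2) (f_b : Fin 2 × ν → Fin 2) (f_c : Fin 2 × ν → Fin 2)
    (ha0 : 0 < ∑ p ∈ Finset.univ.filter (fun p : μ × ν => f_a p.1 = 0),
        Pμ p.1 * Pν p.2)
    (ha1 : 0 < ∑ p ∈ Finset.univ.filter (fun p : μ × ν => f_a p.1 = 1),
        Pμ p.1 * Pν p.2) :
    (∑ p ∈ Finset.univ.filter (fun p : μ × ν =>
        f_a p.1 = 0 ∧ f_b (f_a p.1, p.2) = 0 ∧ f_c (f_b (f_a p.1, p.2), p.2) = 0),
        Pμ p.1 * Pν p.2) /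
      (∑ p ∈ Finset.univ.filter (fun p : μ × ν => f_a p.1 = 0), Pμ p.1 * Pν p.2)
    + (∑ p ∈ Finset.univ.filter (fun p : μ × ν =>
        f_a p.1 = 1 ∧ f_b (f_a p.1, p.2) = 0 ∧ f_c (f_b (f_a p.1, p.2), p.2) = 1),
        Pμ p.1 * Pν p.2) /
      (∑ p ∈ Finset.univ.filter (fun p : μ × ν => f_a p.1 = 1), Pμ p.1 * Pν p.2)
    ≤ 1 := by
  rw [filter_instrumental_eq, filter_instrumental_eq,
    sum_filter_and_mul_div_sum_filter_fst_mul Pμ Pν hν1 (f_a · = 0)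
      (fun y => f_b (0, y) = 0 ∧ f_c (0, y) = 0) ha0.ne',
    sum_filter_and_mul_div_sum_filter_fst_mul Pμ Pν hν1 (f_a · = 1)
      (fun y => f_b (1, y) = 0 ∧ f_c (0, y) = 1) ha1.ne']
  exact sum_filter_add_sum_filter_le_one Pν hν0 hν1 _ _ fun y h0 h1 =>
    absurd (h0.2.symm.trans h1.2) (by decide)

/-- any functional causal model of the instrumental scenario
satisfies Pearl's instrumental inequality
`P(b=0,c=0|a=0) + P(b=0,c=1|a=1) ≤ 1`. -/
theorem instrumental_inequality
    {μ ν : Type*} [Fintype μ] [Fintype ν]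
    (Pμ : μ → ℝ) (Pν : ν → ℝ)
    (hμ0 : ∀ x, 0 ≤ Pμ x) (hμ1 : ∑ x, Pμ x = 1)
    (hν0 : ∀ x, 0 ≤ Pν x) (hν1 : ∑ x, Pν x = 1)
    (f_a : μ → Fin 2) (f_b : Fin 2 × ν → Fin 2) (f_c : Fin 2 × ν → Fin 2)
    (ha0 : 0 < ∑ p ∈ Finset.univ.filter (fun p : μ × ν => f_a p.1 = 0),
        Pμ p.1 * Pν p.2)
    (ha1 : 0 < ∑ p ∈ Finset.univ.filter (fun p : μ × ν => f_a p.1 = 1),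
        Pμ p.1 * Pν p.2) :
    (∑ p ∈ Finset.univ.filter (fun p : μ × ν =>
        f_a p.1 = 0 ∧ f_b (f_a p.1, p.2) = 0 ∧ f_c (f_b (f_a p.1, p.2), p.2) = 0),
        Pμ p.1 * Pν p.2) /
      (∑ p ∈ Finset.univ.filter (fun p : μ × ν => f_a p.1 = 0), Pμ p.1 * Pν p.2)
    + (∑ p ∈ Finset.univ.filter (fun p : μ × ν =>
        f_a p.1 = 1 ∧ f_b (f_a p.1, p.2) = 0 ∧ f_c (f_b (f_a p.1, p.2), p.2) = 1),
        Pμ p.1 * Pν p.2) /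
      (∑ p ∈ Finset.univ.filter (fun p : μ × ν => f_a p.1 = 1), Pμ p.1 * Pν p.2)
    ≤ 1 :=
  instrumental_inequality_general Pμ Pν hν0 hν1 f_a f_b f_c ha0 ha1
end

section
/- Let μ, ν, ρ be finite nonempty sets and consider the triangle structure observation map T(m, n, r) = (f_a(n, r), f_b(r, m), f_c(m, n)) with values in (Fin 2)³. If the image of T contains (1,0,0), (0,1,0), and (0,0,1), then the image of T also contains at least one triple in which two or more coordinates equal 1, or the triple (0,0,0). -/
/-!
Let `(m₁, n₁, r₁)`, `(m₂, n₂, r₂)`, `(m₃, n₃, r₃)` witness `a = 1`, `b = 1`, `c = 1` respectively,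
and look at the mixed point `(m₂, n₃, r₁)`. If its `a` is `1`, then so are both `a` and `c` at
`(m₃, n₃, r₁)`; if its `b` is `1`, then `a` and `b` at `(m₂, n₁, r₁)`; if its `c` is `1`, then
`b` and `c` at `(m₂, n₃, r₂)`. Otherwise the mixed point is `(0, 0, 0)`.
-/

namespace Triangle

variable {μ ν ρ α : Type*}

def obs (f_a : ν × ρ → α) (f_b : ρ × μ → α) (f_c : μ × ν → α) (t : μ × ν × ρ) : α × α × α :=
  (f_a (t.2.1, t.2.2), f_b (t.2.2, t.1), f_c (t.1, t.2.1))

def TwoCoordsEq (o : α) (s : α × α × α) : Prop :=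
  (s.1 = o ∧ s.2.1 = o) ∨ (s.1 = o ∧ s.2.2 = o) ∨ (s.2.1 = o ∧ s.2.2 = o)

theorem exists_twoCoordsEq_or_forall_ne (o : α)
    {f_a : ν × ρ → α} {f_b : ρ × μ → α} {f_c : μ × ν → α}
    (ha : ∃ n r, f_a (n, r) = o) (hb : ∃ r m, f_b (r, m) = o) (hc : ∃ m n, f_c (m, n) = o) :
    ∃ s ∈ Set.range (obs f_a f_b f_c),
      TwoCoordsEq o s ∨ (s.1 ≠ o ∧ s.2.1 ≠ o ∧ s.2.2 ≠ o) := by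
  obtain ⟨n₁, r₁, ha₁⟩ := ha
  obtain ⟨r₂, m₂, hb₂⟩ := hb
  obtain ⟨m₃, n₃, hc₃⟩ := hc
  by_cases hA : f_a (n₃, r₁) = o
  · exact ⟨_, ⟨(m₃, n₃, r₁), rfl⟩, .inl (.inr (.inl ⟨hA, hc₃⟩))⟩
  by_cases hB : f_b (r₁, m₂) = o
  · exact ⟨_, ⟨(m₂, n₁, r₁), rfl⟩, .inl (.inl ⟨ha₁, hB⟩)⟩
  by_cases hC : f_c (m₂, n₃) = o
  · exact ⟨_, ⟨(m₂, n₃, r₂), rfl⟩, .inl (.inr (.inr ⟨hb₂, hC⟩))⟩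
  exact ⟨_, ⟨(m₂, n₃, r₁), rfl⟩, .inr ⟨hA, hB, hC⟩⟩

end Triangle

open Triangle in
theorem triangle_image_extra_general
    {μ ν ρ : Type*}
    (f_a : ν × ρ → Fin 2) (f_b : ρ × μ → Fin 2) (f_c : μ × ν → Fin 2)
    (h100 : ((1 : Fin 2), (0 : Fin 2), (0 : Fin 2)) ∈ Set.range (fun t : μ × ν × ρ =>
        (f_a (t.2.1, t.2.2), f_b (t.2.2, t.1), f_c (t.1, t.2.1))))
    (h010 : ((0 : Fin 2), (1 : Fin 2), (0 : Fin 2)) ∈ Set.range (fun t : μ × ν × ρ =>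
        (f_a (t.2.1, t.2.2), f_b (t.2.2, t.1), f_c (t.1, t.2.1))))
    (h001 : ((0 : Fin 2), (0 : Fin 2), (1 : Fin 2)) ∈ Set.range (fun t : μ × ν × ρ =>
        (f_a (t.2.1, t.2.2), f_b (t.2.2, t.1), f_c (t.1, t.2.1)))) :
    ∃ s ∈ Set.range (fun t : μ × ν × ρ =>
        (f_a (t.2.1, t.2.2), f_b (t.2.2, t.1), f_c (t.1, t.2.1))),
      ((s.1 = 1 ∧ s.2.1 = 1) ∨ (s.1 = 1 ∧ s.2.2 = 1) ∨ (s.2.1 = 1 ∧ s.2.2 = 1))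
        ∨ s = (0, 0, 0) := by
  obtain ⟨t₁, ht₁⟩ := h100
  obtain ⟨t₂, ht₂⟩ := h010
  obtain ⟨t₃, ht₃⟩ := h001
  obtain ⟨s, hs, hs_two | ⟨hs_a, hs_b, hs_c⟩⟩ := exists_twoCoordsEq_or_forall_ne (1 : Fin 2)
    ⟨t₁.2.1, t₁.2.2, congrArg Prod.fst ht₁⟩ ⟨t₂.2.2, t₂.1, congrArg (·.2.1) ht₂⟩
    ⟨t₃.1, t₃.2.1, congrArg (·.2.2) ht₃⟩
  · exact ⟨s, hs, .inl hs_two⟩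
  · have eq_zero_of_ne_one : ∀ x : Fin 2, x ≠ 1 → x = 0 := by decide
    exact ⟨s, hs, .inr (Prod.ext (eq_zero_of_ne_one _ hs_a)
      (Prod.ext (eq_zero_of_ne_one _ hs_b) (eq_zero_of_ne_one _ hs_c)))⟩

/-- if the image of the triangle observation map contains all
three one-hot triples, it also contains a triple with at least two `1`s or
the triple `(0,0,0)`. -/
theorem triangle_image_extra
    {μ ν ρ : Type*} [Fintype μ] [Fintype ν] [Fintype ρ]
    [Nonempty μ] [Nonempty ν] [Nonempty ρ]
    (f_a : ν × ρ → Fin 2) (f_b : ρ × μ → Fin 2) (f_c : μ × ν → Fin 2)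
    (h100 : ((1 : Fin 2), (0 : Fin 2), (0 : Fin 2)) ∈ Set.range (fun t : μ × ν × ρ =>
        (f_a (t.2.1, t.2.2), f_b (t.2.2, t.1), f_c (t.1, t.2.1))))
    (h010 : ((0 : Fin 2), (1 : Fin 2), (0 : Fin 2)) ∈ Set.range (fun t : μ × ν × ρ =>
        (f_a (t.2.1, t.2.2), f_b (t.2.2, t.1), f_c (t.1, t.2.1))))
    (h001 : ((0 : Fin 2), (0 : Fin 2), (1 : Fin 2)) ∈ Set.range (fun t : μ × ν × ρ =>
        (f_a (t.2.1, t.2.2), f_b (t.2.2, t.1), f_c (t.1, t.2.1)))) :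
    ∃ s ∈ Set.range (fun t : μ × ν × ρ =>
        (f_a (t.2.1, t.2.2), f_b (t.2.2, t.1), f_c (t.1, t.2.1))),
      ((s.1 = 1 ∧ s.2.1 = 1) ∨ (s.1 = 1 ∧ s.2.2 = 1) ∨ (s.2.1 = 1 ∧ s.2.2 = 1))
        ∨ s = (0, 0, 0) :=
  triangle_image_extra_general f_a f_b f_c h100 h010 h001
end

section
/- Let S ⊆ Fin 2 × Ω_b × Fin 2 be any set of triples such that every element of S has (first, third) coordinates equal to (0, 1) or (1, 0), and S contains at least one element of each kind. Then S is not possibilistically compatible with the W causal structure: there do not exist finite nonempty sets μ, ν and functions f_a : μ → Fin 2, f_b : μ × ν → Ω_b, f_c : ν → Fin 2 such that the image of (λ, κ) ↦ (f_a(λ), f_b(λ, κ), f_c(κ)) equals S. -/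
/-- any support whose `(a, c)` values are all `(0,1)` or `(1,0)`,
containing at least one element of each kind, is possibilistically
incompatible with the W causal structure. -/
theorem w_structure_anticorrelated_incompatible
    {Ω_b : Type*} (S : Set (Fin 2 × Ω_b × Fin 2))
    (hS : ∀ s ∈ S, (s.1 = 0 ∧ s.2.2 = 1) ∨ (s.1 = 1 ∧ s.2.2 = 0))
    (h01 : ∃ s ∈ S, s.1 = 0 ∧ s.2.2 = 1)
    (h10 : ∃ s ∈ S, s.1 = 1 ∧ s.2.2 = 0) :
    ¬ ∃ (μ ν : Type) (_ : Fintype μ) (_ : Fintype ν) (_ : Nonempty μ)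
        (_ : Nonempty ν) (f_a : μ → Fin 2) (f_b : μ × ν → Ω_b)
        (f_c : ν → Fin 2),
        Set.range (fun p : μ × ν => (f_a p.1, f_b p, f_c p.2)) = S := by
  rintro ⟨μ, ν, _, _, _, _, f_a, f_b, f_c, hrange⟩
  obtain ⟨s0, hs0S, ha0, _⟩ := h01
  obtain ⟨s1, hs1S, _, hc1⟩ := h10
  rw [← hrange] at hs0S hs1S
  obtain ⟨⟨l0, k0⟩, h0⟩ := hs0S
  obtain ⟨⟨l1, k1⟩, h1⟩ := hs1S
  have hfa : f_a l0 = 0 := by rw [← ha0, ← h0]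
  have hfc : f_c k1 = 0 := by rw [← hc1, ← h1]
  have hmem : (f_a l0, f_b (l0, k1), f_c k1) ∈ S := by
    rw [← hrange]; exact ⟨(l0, k1), rfl⟩
  rcases hS _ hmem with ⟨_, h⟩ | ⟨h, _⟩
  · simp [hfc] at h
  · simp [hfa] at h
end
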